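/- Let F be a connected GSC, n ≥ 1, 𝐣 = j₁⋯j_n ∈ D^n, and ω, τ ∈ D \ {j₁}. Then the following are equivalent: (1) the vertex sets ωD^{n−1} and τD^{n−1} lie in different connected components of the graph Γ_n − {𝐣}; (2) φ_ω(F) and φ_τ(F) lie in different connected components of ⋃_{η ∈ D^n \ {𝐣}} φ_η(F). -/

import Mathlib

/-!
The union `⋃_{η ≠ 𝐣} φ_η(F)` is a finite union of closed connected cells whose intersection
graph is exactly `Γ_n − {𝐣}`. In such a union two points lie in the same connected component
iff their cells are joined by a path in the intersection graph: a chain of pairwise meeting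
connected cells is connected, and conversely the cells reachable from a given one form a closed
set disjoint from the closed union of the remaining cells, so a connected component cannot
leave it. Since `φ_ω(F)` is the union of the cells `ωD^{n−1}`, the theorem follows.
-/

open Set Topology

noncomputable def phi (N : ℕ) (i : ℕ × ℕ) (p : ℝ × ℝ) : ℝ × ℝ :=
  ((p.1 + (i.1 : ℝ)) / (N : ℝ), (p.2 + (i.2 : ℝ)) / (N : ℝ))

noncomputable def phiW (N : ℕ) (l : List (ℕ × ℕ)) : ℝ × ℝ → ℝ × ℝ :=
  l.foldr (fun i g => phi N i ∘ g) id

def Words (D : Finset (ℕ × ℕ)) (k : ℕ) : Set (List (ℕ × ℕ)) :=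
  {l | l.length = k ∧ ∀ a ∈ l, a ∈ D}

def GoodDigits (N : ℕ) (D : Finset (ℕ × ℕ)) : Prop :=
  2 ≤ N ∧ (∀ i ∈ D, i.1 < N ∧ i.2 < N) ∧ 1 < D.card ∧ D.card < N ^ 2

def IsAttractor (N : ℕ) (D : Finset (ℕ × ℕ)) (F : Set (ℝ × ℝ)) : Prop :=
  F.Nonempty ∧ IsCompact F ∧ F = ⋃ i ∈ D, phi N i '' F

def OmegaW (N : ℕ) (D : Finset (ℕ × ℕ)) (F : Set (ℝ × ℝ)) (x : ℝ × ℝ) (k : ℕ) :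
    Set (List (ℕ × ℕ)) :=
  {l | l ∈ Words D k ∧ x ∈ phiW N l '' F}

def Ek (N : ℕ) (D : Finset (ℕ × ℕ)) (F : Set (ℝ × ℝ)) (x : ℝ × ℝ) (k : ℕ) :
    Set (ℝ × ℝ) :=
  ⋃ l ∈ Words D k \ OmegaW N D F x k, phiW N l '' F

def IsRep (N : ℕ) (D : Finset (ℕ × ℕ)) (F : Set (ℝ × ℝ)) (x : ℝ × ℝ)
    (ii : ℕ → ℕ × ℕ) : Prop :=
  (∀ k, ii k ∈ D) ∧ ∀ k : ℕ, x ∈ phiW N (List.ofFn fun j : Fin k => ii (j : ℕ)) '' F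

def SepComp (E A B : Set (ℝ × ℝ)) : Prop :=
  A ⊆ E ∧ B ⊆ E ∧
    ∀ y ∈ A, ∀ z ∈ B, connectedComponentIn E y ≠ connectedComponentIn E z

def WellSep (N : ℕ) (D : Finset (ℕ × ℕ)) (F : Set (ℝ × ℝ)) (x : ℝ × ℝ) (n : ℕ)
    (ω τ : List (ℕ × ℕ)) : Prop :=
  ∀ p : ℕ, 1 ≤ p → SepComp (Ek N D F x (n + p)) (phiW N ω '' F) (phiW N τ '' F)

def hataRel (N : ℕ) (D : Finset (ℕ × ℕ)) (F : Set (ℝ × ℝ)) (n : ℕ)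
    (jw : List (ℕ × ℕ)) (l l' : List (ℕ × ℕ)) : Prop :=
  l ∈ Words D n ∧ l' ∈ Words D n ∧ l ≠ jw ∧ l' ≠ jw ∧ l ≠ l' ∧
    ((phiW N l '' F) ∩ (phiW N l' '' F)).Nonempty

def hataMinus (N : ℕ) (D : Finset (ℕ × ℕ)) (F : Set (ℝ × ℝ)) (n : ℕ)
    (jw : List (ℕ × ℕ)) : SimpleGraph (List (ℕ × ℕ)) :=
  SimpleGraph.fromRel (hataRel N D F n jw)

section IntersectionGraph

variable {ι X : Type*} {s : Set ι} {K : ι → Set X}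

def intersectionGraph (s : Set ι) (K : ι → Set X) : SimpleGraph ι :=
  SimpleGraph.fromRel fun i j => i ∈ s ∧ j ∈ s ∧ (K i ∩ K j).Nonempty

namespace intersectionGraph

lemma adj_iff {i j : ι} : (intersectionGraph s K).Adj i j ↔
    i ≠ j ∧ i ∈ s ∧ j ∈ s ∧ (K i ∩ K j).Nonempty := by
  simp only [intersectionGraph, SimpleGraph.fromRel_adj, Set.inter_comm (K j)]
  tauto

lemma reachable_of_inter_nonempty {i k m : ι} (hik : (intersectionGraph s K).Reachable i k)
    (hk : k ∈ s) (hm : m ∈ s) (hkm : (K k ∩ K m).Nonempty) :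
    (intersectionGraph s K).Reachable i m := by
  by_cases h : k = m
  · exact h ▸ hik
  · exact hik.trans (adj_iff.2 ⟨h, hk, hm, hkm⟩).reachable

variable [TopologicalSpace X]

lemma connectedComponentIn_eq_of_reachable (hK : ∀ i ∈ s, IsPreconnected (K i)) {i j : ι}
    (hij : (intersectionGraph s K).Reachable i j) (hi : i ∈ s) {x y : X} (hx : x ∈ K i)
    (hy : y ∈ K j) :
    connectedComponentIn (⋃ k ∈ s, K k) x = connectedComponentIn (⋃ k ∈ s, K k) y := by
  have same_cell {k : ι} (hk : k ∈ s) {z z' : X} (hz : z ∈ K k) (hz' : z' ∈ K k) :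
      connectedComponentIn (⋃ k ∈ s, K k) z = connectedComponentIn (⋃ k ∈ s, K k) z' :=
    connectedComponentIn_eq <|
      (hK k hk).subset_connectedComponentIn hz (subset_biUnion_of_mem hk) hz'
  obtain ⟨w⟩ := hij
  induction w generalizing x with
  | nil => exact same_cell hi hx hy
  | cons hadj _ ih =>
    obtain ⟨-, -, hv, z, hxz, hz⟩ := adj_iff.1 hadj
    exact (same_cell hi hx hxz).trans (ih hv hz hy)

lemma reachable_of_connectedComponentIn_eq (hs : s.Finite) (hK : ∀ i ∈ s, IsClosed (K i))
    {i j : ι} (hi : i ∈ s) (hj : j ∈ s) {x y : X} (hx : x ∈ K i) (hy : y ∈ K j)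
    (hxy : connectedComponentIn (⋃ k ∈ s, K k) x = connectedComponentIn (⋃ k ∈ s, K k) y) :
    (intersectionGraph s K).Reachable i j := by
  set R := {k ∈ s | (intersectionGraph s K).Reachable i k}
  set S := ⋃ k ∈ R, K k
  set T := ⋃ k ∈ s \ R, K k
  have hST : S ∩ T = ∅ := by
    refine eq_empty_of_forall_notMem fun z ⟨hzS, hzT⟩ => ?_
    obtain ⟨k, hk, hzk⟩ := mem_iUnion₂.1 hzS
    obtain ⟨m, hm, hzm⟩ := mem_iUnion₂.1 hzT
    exact hm.2 ⟨hm.1, reachable_of_inter_nonempty hk.2 hk.1 hm.1 ⟨z, hzk, hzm⟩⟩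
  have hcover : (⋃ k ∈ s, K k) ⊆ S ∪ T := iUnion₂_subset fun k hk z hz => by
    by_cases hkR : k ∈ R
    · exact .inl (mem_biUnion hkR hz)
    · exact .inr (mem_biUnion ⟨hk, hkR⟩ hz)
  have hxS : x ∈ S := mem_biUnion ⟨hi, .refl i⟩ hx
  have hxE : x ∈ ⋃ k ∈ s, K k := mem_biUnion hi hx
  have hSc : IsClosed S := (hs.subset (sep_subset _ _)).isClosed_biUnion fun k hk => hK k hk.1
  have hTc : IsClosed T := (hs.subset sdiff_subset).isClosed_biUnion fun k hk => hK k hk.1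
  have hCS : connectedComponentIn (⋃ k ∈ s, K k) x ⊆ S := by
    refine (isPreconnected_iff_subset_of_disjoint_closed.1 isPreconnected_connectedComponentIn
      S T hSc hTc ((connectedComponentIn_subset _ _).trans hcover)
      (by rw [hST, inter_empty])).resolve_right fun hCT => ?_
    exact eq_empty_iff_forall_notMem.1 hST x ⟨hxS, hCT (mem_connectedComponentIn hxE)⟩
  have hyS : y ∈ S := hCS (hxy ▸ mem_connectedComponentIn (mem_biUnion hj hy))
  obtain ⟨k, hk, hyk⟩ := mem_iUnion₂.1 hyS
  exact reachable_of_inter_nonempty hk.2 hk.1 hj ⟨y, hyk, hy⟩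

theorem reachable_iff_connectedComponentIn_eq (hs : s.Finite)
    (hK : ∀ i ∈ s, IsClosed (K i) ∧ IsPreconnected (K i)) {i j : ι} (hi : i ∈ s) (hj : j ∈ s)
    {x y : X} (hx : x ∈ K i) (hy : y ∈ K j) :
    (intersectionGraph s K).Reachable i j ↔
      connectedComponentIn (⋃ k ∈ s, K k) x = connectedComponentIn (⋃ k ∈ s, K k) y :=
  ⟨fun h => connectedComponentIn_eq_of_reachable (fun k hk => (hK k hk).2) h hi hx hy,
    reachable_of_connectedComponentIn_eq hs (fun k hk => (hK k hk).1) hi hj hx hy⟩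

end intersectionGraph

end IntersectionGraph

lemma phiW_cons (N : ℕ) (i : ℕ × ℕ) (l : List (ℕ × ℕ)) :
    phiW N (i :: l) = phi N i ∘ phiW N l := rfl

lemma continuous_phi (N : ℕ) (i : ℕ × ℕ) : Continuous (phi N i) := by
  unfold phi; fun_prop

lemma continuous_phiW (N : ℕ) (l : List (ℕ × ℕ)) : Continuous (phiW N l) := by
  induction l with
  | nil => exact continuous_id
  | cons i l ih => exact (continuous_phi N i).comp ih

lemma words_zero (D : Finset (ℕ × ℕ)) : Words D 0 = {[]} := by
  ext l
  simp only [Words, mem_ofPred_eq, mem_singleton_iff, List.length_eq_zero_iff]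
  exact ⟨And.left, fun h => ⟨h, by simp [h]⟩⟩

lemma words_succ (D : Finset (ℕ × ℕ)) (k : ℕ) :
    Words D (k + 1) = image2 List.cons (D : Set (ℕ × ℕ)) (Words D k) := by
  ext (_ | ⟨i, l⟩)
  · simp [Words]
  · simp only [Words, mem_ofPred_eq, mem_image2, List.cons.injEq, List.length_cons,
      List.forall_mem_cons, Finset.mem_coe, Nat.add_right_cancel_iff]
    constructor
    · rintro ⟨hl, hi, hD⟩; exact ⟨i, hi, l, ⟨hl, hD⟩, rfl, rfl⟩
    · rintro ⟨_, hi, _, ⟨hl, hD⟩, rfl, rfl⟩; exact ⟨hl, hi, hD⟩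

lemma words_finite (D : Finset (ℕ × ℕ)) (k : ℕ) : (Words D k).Finite := by
  induction k with
  | zero => simp [words_zero]
  | succ k ih => rw [words_succ]; exact D.finite_toSet.image2 _ ih

lemma cons_mem_words {D : Finset (ℕ × ℕ)} {k : ℕ} {i : ℕ × ℕ} {l : List (ℕ × ℕ)}
    (hi : i ∈ D) (hl : l ∈ Words D k) : i :: l ∈ Words D (k + 1) := by
  rw [words_succ]; exact mem_image2_of_mem hi hl

lemma iUnion_words_image_eq {N : ℕ} {D : Finset (ℕ × ℕ)} {F : Set (ℝ × ℝ)}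
    (hF : F = ⋃ i ∈ D, phi N i '' F) (k : ℕ) : ⋃ l ∈ Words D k, phiW N l '' F = F := by
  induction k with
  | zero => simp [words_zero, phiW]
  | succ k ih =>
    simp_rw [words_succ, biUnion_image2, phiW_cons, image_comp, ← image_iUnion₂, ih]
    exact hF.symm

lemma image_phi_eq_iUnion {N : ℕ} {D : Finset (ℕ × ℕ)} {F : Set (ℝ × ℝ)}
    (hF : F = ⋃ i ∈ D, phi N i '' F) (i : ℕ × ℕ) (k : ℕ) :
    phi N i '' F = ⋃ a ∈ Words D k, phiW N (i :: a) '' F := by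
  conv_lhs => rw [← iUnion_words_image_eq hF k, image_iUnion₂]
  simp_rw [phiW_cons, image_comp]

lemma hataMinus_eq_intersectionGraph (N : ℕ) (D : Finset (ℕ × ℕ)) (F : Set (ℝ × ℝ)) (n : ℕ)
    (jw : List (ℕ × ℕ)) :
    hataMinus N D F n jw = intersectionGraph (Words D n \ {jw}) (fun l => phiW N l '' F) := by
  ext l l'
  simp only [hataMinus, hataRel, intersectionGraph.adj_iff, SimpleGraph.fromRel_adj,
    mem_sdiff, mem_singleton_iff, inter_comm (phiW N l' '' F)]
  tauto

theorem stmt11_general (N : ℕ) (D : Finset (ℕ × ℕ))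
    (F : Set (ℝ × ℝ)) (hF : IsAttractor N D F) (hFconn : IsConnected F)
    (n : ℕ) (hn : 1 ≤ n) (j1 : ℕ × ℕ) (jrest : List (ℕ × ℕ))
    (ω τ : ℕ × ℕ) (hω : ω ∈ D) (hτ : τ ∈ D) (hωj : ω ≠ j1) (hτj : τ ≠ j1) :
    (∀ a ∈ Words D (n - 1), ∀ b ∈ Words D (n - 1),
        ¬ (hataMinus N D F n (j1 :: jrest)).Reachable (ω :: a) (τ :: b)) ↔
      SepComp (⋃ l ∈ Words D n \ {j1 :: jrest}, phiW N l '' F)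
        (phi N ω '' F) (phi N τ '' F) := by
  obtain ⟨hFne, hFcpt, hFeq⟩ := hF
  obtain ⟨m, rfl⟩ : ∃ m, n = m + 1 := ⟨n - 1, by omega⟩
  rw [Nat.add_sub_cancel, hataMinus_eq_intersectionGraph]
  set s := Words D (m + 1) \ {j1 :: jrest}
  have hmem {σ : ℕ × ℕ} (hσ : σ ∈ D) (hσj : σ ≠ j1) {a : List (ℕ × ℕ)} (ha : a ∈ Words D m) :
      σ :: a ∈ s :=
    ⟨cons_mem_words hσ ha, fun h => hσj (List.cons.inj h).1⟩
  have hsub {σ : ℕ × ℕ} (hσ : σ ∈ D) (hσj : σ ≠ j1) :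
      phi N σ '' F ⊆ ⋃ l ∈ s, phiW N l '' F := by
    rw [image_phi_eq_iUnion hFeq σ m]
    exact iUnion₂_subset fun a ha =>
      subset_biUnion_of_mem (u := fun l => phiW N l '' F) (hmem hσ hσj ha)
  have hs : s.Finite := (words_finite D _).subset sdiff_subset
  have hK (l : List (ℕ × ℕ)) (_ : l ∈ s) :
      IsClosed (phiW N l '' F) ∧ IsPreconnected (phiW N l '' F) :=
    ⟨(hFcpt.image (continuous_phiW N l)).isClosed,
      hFconn.isPreconnected.image _ (continuous_phiW N l).continuousOn⟩
  constructor
  · intro hsep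
    refine ⟨hsub hω hωj, hsub hτ hτj, fun y hy z hz hyz => ?_⟩
    obtain ⟨a, ha, hya⟩ := mem_iUnion₂.1 (image_phi_eq_iUnion hFeq ω m ▸ hy)
    obtain ⟨b, hb, hzb⟩ := mem_iUnion₂.1 (image_phi_eq_iUnion hFeq τ m ▸ hz)
    exact hsep a ha b hb <|
      (intersectionGraph.reachable_iff_connectedComponentIn_eq hs hK (hmem hω hωj ha)
        (hmem hτ hτj hb) hya hzb).2 hyz
  · rintro ⟨-, -, hsep⟩ a ha b hb hab
    obtain ⟨y, hy⟩ := hFne.image (phiW N (ω :: a))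
    obtain ⟨z, hz⟩ := hFne.image (phiW N (τ :: b))
    refine hsep y ?_ z ?_ <|
      (intersectionGraph.reachable_iff_connectedComponentIn_eq hs hK (hmem hω hωj ha)
        (hmem hτ hτj hb) hy hz).1 hab
    · rw [image_phi_eq_iUnion hFeq ω m]; exact mem_biUnion ha hy
    · rw [image_phi_eq_iUnion hFeq τ m]; exact mem_biUnion hb hz

theorem stmt11 (N : ℕ) (D : Finset (ℕ × ℕ)) (hND : GoodDigits N D)
    (F : Set (ℝ × ℝ)) (hF : IsAttractor N D F) (hFconn : IsConnected F)
    (n : ℕ) (hn : 1 ≤ n) (j1 : ℕ × ℕ) (jrest : List (ℕ × ℕ))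
    (hj : j1 :: jrest ∈ Words D n)
    (ω τ : ℕ × ℕ) (hω : ω ∈ D) (hτ : τ ∈ D) (hωj : ω ≠ j1) (hτj : τ ≠ j1) :
    (∀ a ∈ Words D (n - 1), ∀ b ∈ Words D (n - 1),
        ¬ (hataMinus N D F n (j1 :: jrest)).Reachable (ω :: a) (τ :: b)) ↔
      SepComp (⋃ l ∈ Words D n \ {j1 :: jrest}, phiW N l '' F)
        (phi N ω '' F) (phi N τ '' F) :=
  stmt11_general N D F hF hFconn n hn j1 jrest ω τ hω hτ hωj hτj
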